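/- arXiv:1003.3849 — 4 statements merged into one kernel-verified Lean document; each statement's English description precedes it below -/
import Mathlib

section
/- Let (E, h) be a real inner product space with 2 ≤ dim E < ∞, let P ⊆ E be a 2-dimensional subspace, and let α > 0 and q > 0. Then there exist X, Y spanning P such that: h(Y,Y) = α⁻², α² (h(X,X)h(Y,Y) − h(X,Y)²) + h(Y,Y) − h(X,X) = α⁻² (equivalently α²·(h(X,X)h(Y,Y) − h(X,Y)²) = h(X,X)), and h(X,X)h(Y,Y) − h(X,Y)² ≥ q. In particular, every plane of E is spanned by pairs satisfying the normalization constraints α²·Gram(X,Y) + h(Y,Y) − h(X,X) = α⁻² and h(Y,Y) ≥ α⁻² with arbitrarily large Gram determinant Gram(X,Y) := h(X,X)h(Y,Y) − h(X,Y)². -/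
/-!
Scale an orthonormal basis `e₁, e₂` of `P`: for `X = α √q • e₁` and `Y = α⁻¹ • e₂` the Gram
determinant is `q`, and `α² q = ⟪X, X⟫`.
-/

open RealInnerProductSpace

theorem Submodule.exists_orthonormal_pair_span_eq {E : Type*} [NormedAddCommGroup E]
    [InnerProductSpace ℝ E] (P : Submodule ℝ E) (hP : Module.finrank ℝ P = 2) :
    ∃ e₁ e₂ : E, Orthonormal ℝ ![e₁, e₂] ∧ Submodule.span ℝ {e₁, e₂} = P := by
  have : FiniteDimensional ℝ P := Module.finite_of_finrank_eq_succ hP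
  let b : OrthonormalBasis (Fin 2) ℝ P := (stdOrthonormalBasis ℝ P).reindex (finCongr hP)
  have hb : ![(b 0 : E), b 1] = P.subtype ∘ b := by
    ext i; fin_cases i <;> rfl
  refine ⟨b 0, b 1, hb ▸ b.orthonormal.comp_linearIsometry P.subtypeₗᵢ, ?_⟩
  rw [← Matrix.range_cons_cons_empty _ _ ![], hb, Set.range_comp, ← Submodule.map_span,
    ← b.coe_toBasis, b.toBasis.span_eq, Submodule.map_top, Submodule.range_subtype]

theorem Submodule.span_pair_smul {R M : Type*} [Ring R] [AddCommGroup M] [Module R M]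
    {a b : R} (ha : IsUnit a) (hb : IsUnit b) (x y : M) :
    span R {a • x, b • y} = span R {x, y} := by
  rw [span_insert, span_insert, span_singleton_smul_eq ha, span_singleton_smul_eq hb]

theorem Orthonormal.inner_smul_pair {E : Type*} [NormedAddCommGroup E] [InnerProductSpace ℝ E]
    {e₁ e₂ : E} (he : Orthonormal ℝ ![e₁, e₂]) (a b : ℝ) :
    ⟪a • e₁, a • e₁⟫ = a ^ 2 ∧ ⟪b • e₂, b • e₂⟫ = b ^ 2 ∧ ⟪a • e₁, b • e₂⟫ = 0 := by
  have h₁ : ‖e₁‖ = 1 := he.1 0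
  have h₂ : ‖e₂‖ = 1 := he.1 1
  have h₁₂ : ⟪e₁, e₂⟫ = 0 := he.2 zero_ne_one
  simp [real_inner_smul_left, real_inner_smul_right, norm_smul, h₁, h₂, h₁₂]

theorem plane_spanned_with_large_gram_general
    {E : Type*} [NormedAddCommGroup E] [InnerProductSpace ℝ E]
    (P : Submodule ℝ E) (hP : Module.finrank ℝ P = 2)
    (α q : ℝ) (hα : 0 < α) (hq : 0 < q) :
    ∃ X Y : E,
      Submodule.span ℝ {X, Y} = P ∧
      ⟪Y, Y⟫ = (α ^ 2)⁻¹ ∧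
      α ^ 2 * (⟪X, X⟫ * ⟪Y, Y⟫ - ⟪X, Y⟫ ^ 2) + ⟪Y, Y⟫ - ⟪X, X⟫ = (α ^ 2)⁻¹ ∧
      α ^ 2 * (⟪X, X⟫ * ⟪Y, Y⟫ - ⟪X, Y⟫ ^ 2) = ⟪X, X⟫ ∧
      ⟪X, X⟫ * ⟪Y, Y⟫ - ⟪X, Y⟫ ^ 2 ≥ q := by
  obtain ⟨e₁, e₂, he, hspan⟩ := P.exists_orthonormal_pair_span_eq hP
  obtain ⟨hXX, hYY, hXY⟩ := he.inner_smul_pair (α * √q) α⁻¹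
  have hs : (α * √q) ^ 2 = α ^ 2 * q := by rw [mul_pow, Real.sq_sqrt hq.le]
  have hgram : (α * √q) ^ 2 * α⁻¹ ^ 2 - 0 ^ 2 = q := by
    rw [hs]; field_simp; ring
  refine ⟨(α * √q) • e₁, α⁻¹ • e₂, ?_, ?_⟩
  · have hs₀ : 0 < α * √q := by positivity
    rw [Submodule.span_pair_smul hs₀.ne'.isUnit (inv_pos.2 hα).ne'.isUnit, hspan]
  · rw [hXX, hYY, hXY, hgram, hs, inv_pow]
    refine ⟨rfl, ?_, ?_, le_rfl⟩ <;> ring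

/-- Every plane `P` of a real inner product space of dimension `≥ 2` is spanned by pairs
`X, Y` satisfying `h(Y,Y) = α⁻²` and `α²·Gram(X,Y) + h(Y,Y) − h(X,X) = α⁻²`
(equivalently `α²·Gram(X,Y) = h(X,X)`), with arbitrarily large Gram determinant. -/
theorem plane_spanned_with_large_gram
    {E : Type*} [NormedAddCommGroup E] [InnerProductSpace ℝ E] [FiniteDimensional ℝ E]
    (hdim : 2 ≤ Module.finrank ℝ E)
    (P : Submodule ℝ E) (hP : Module.finrank ℝ P = 2)
    (α q : ℝ) (hα : 0 < α) (hq : 0 < q) :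
    ∃ X Y : E,
      Submodule.span ℝ {X, Y} = P ∧
      ⟪Y, Y⟫ = (α ^ 2)⁻¹ ∧
      α ^ 2 * (⟪X, X⟫ * ⟪Y, Y⟫ - ⟪X, Y⟫ ^ 2) + ⟪Y, Y⟫ - ⟪X, X⟫ = (α ^ 2)⁻¹ ∧
      α ^ 2 * (⟪X, X⟫ * ⟪Y, Y⟫ - ⟪X, Y⟫ ^ 2) = ⟪X, X⟫ ∧
      ⟪X, X⟫ * ⟪Y, Y⟫ - ⟪X, Y⟫ ^ 2 ≥ q :=
  plane_spanned_with_large_gram_general P hP α q hα hq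
end

section
/- Let (E, h) be a real inner product space with 2 ≤ dim E < ∞, let B be a symmetric bilinear form on the second exterior power Λ²E, and let α > 0 and a', a'' ∈ ℝ. On V := ℝ × E define the Lorentzian form g((u,X),(v,Y)) := u v − α² h(X,Y), and for U = (u,X) and V' = (v,Y) in V define Q(U, V') := −α² B(X∧Y, X∧Y) + α a'' h(uY − vX, uY − vX) − (α a')² (h(X,X)h(Y,Y) − h(X,Y)²). Then the sign condition 'Q(U, V') ≤ 0 for every timelike U (i.e. g(U,U) > 0) and every spacelike V' (i.e. g(V',V') < 0)' holds if and only if a'' ≤ 0 and B(X∧Y, X∧Y) ≥ (α a'' − a'²)·(h(X,X)h(Y,Y) − h(X,Y)²) for all X, Y ∈ E. (This is the pointwise algebraic content of the criterion: for a warped product metric dt² − α(t)² h, the condition ⟨R(U∧V'), U∧V'⟩ ≤ 0 for all timelike U and spacelike V' is equivalent to α'' ≤ 0 together with the lower bound inf of sectional curvatures of (M,h) ≥ sup (αα'' − α'²), where Q is the value of ⟨R(U∧V'), U∧V'⟩ given by the warped-product curvature formula with B the curvature form of (M,h).) -/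
/-!
The whole criterion rests on the reverse Cauchy–Schwarz inequality of the Lorentzian form
`g = du² − α² h`: for `U = (u,X)`, `V' = (v,Y)` one has
`α² (|uY − vX|² − α² Gram(X,Y)) = g(U,V')² − g(U,U) g(V',V')`, which is positive when `U` is
timelike and `V'` spacelike. Hence `Q = −α² (B − (α a'' − a'²) Gram) + α a'' (|uY − vX|² − α² Gram)`
is `≤ 0` as soon as `a'' ≤ 0` and the lower bound on `B` hold. Conversely, `U = (1,0)` and
`V' = (0,Y)` force `a'' ≤ 0`; for `X ⊥ Y`, testing `U = (u,X)` with `u² ↓ α²|X|²` against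
`V' = (0,Y)` gives the bound on `B`, and the general case follows since `X ∧ Y` and the Gram
determinant do not change when `Y` is replaced by its component orthogonal to `X`.
-/

noncomputable section

open RealInnerProductSpace

/-- The exterior product `X ∧ Y` as an element of the second exterior power. -/
def wedge2 {V : Type*} [AddCommGroup V] [Module ℝ V] (u v : V) : ⋀[ℝ]^2 V :=
  ⟨ExteriorAlgebra.ιMulti ℝ 2 ![u, v],
    ExteriorAlgebra.ιMulti_range ℝ 2 (Set.mem_range_self ![u, v])⟩

section Wedge

variable {V : Type*} [AddCommGroup V] [Module ℝ V]

open ExteriorAlgebra in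
theorem coe_wedge2 (X Y : V) : (wedge2 X Y : ExteriorAlgebra ℝ V) = ι ℝ X * ι ℝ Y := by
  simp [wedge2, ιMulti_apply]

theorem wedge2_zero_left (Y : V) : wedge2 (0 : V) Y = 0 :=
  Subtype.ext <| by simp [coe_wedge2]

theorem wedge2_zero_right (X : V) : wedge2 X (0 : V) = 0 :=
  Subtype.ext <| by simp [coe_wedge2]

theorem wedge2_sub_smul_right (X Y : V) (c : ℝ) : wedge2 X (Y - c • X) = wedge2 X Y :=
  Subtype.ext <| by simp [coe_wedge2, mul_sub]

end Wedge

theorem le_of_forall_pos_le_add_mul {a b c : ℝ} (h : ∀ t : ℝ, 0 < t → a ≤ b + c * t) : a ≤ b := by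
  refine le_of_forall_pos_le_add fun ε hε => (h (ε / (|c| + 1)) (by positivity)).trans ?_
  gcongr
  calc c * (ε / (|c| + 1)) ≤ |c| * (ε / (|c| + 1)) := by gcongr; exact le_abs_self c
    _ ≤ ε := by rw [mul_div_assoc', div_le_iff₀ (by positivity)]; nlinarith

section InnerProductSpace

variable {E : Type*} [NormedAddCommGroup E] [InnerProductSpace ℝ E]

def gram (X Y : E) : ℝ := ⟪X, X⟫ * ⟪Y, Y⟫ - ⟪X, Y⟫ ^ 2

theorem gram_sub_smul_right (X Y : E) (c : ℝ) : gram X (Y - c • X) = gram X Y := by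
  simp only [gram, inner_sub_left, inner_sub_right, real_inner_smul_left, real_inner_smul_right,
    real_inner_comm X Y]
  ring

theorem inner_sub_smul_proj_eq_zero (X Y : E) : ⟪X, Y - (⟪X, Y⟫ / ⟪X, X⟫) • X⟫ = 0 := by
  rcases eq_or_ne X 0 with rfl | hX
  · simp
  · rw [inner_sub_right, real_inner_smul_right, div_mul_cancel₀ _ (inner_self_ne_zero.2 hX),
      sub_self]

theorem sq_mul_inner_sub_gram_eq (α u v : ℝ) (X Y : E) :
    α ^ 2 * (⟪u • Y - v • X, u • Y - v • X⟫ - α ^ 2 * gram X Y)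
      = (u * v - α ^ 2 * ⟪X, Y⟫) ^ 2
        - (u * u - α ^ 2 * ⟪X, X⟫) * (v * v - α ^ 2 * ⟪Y, Y⟫) := by
  simp only [gram, inner_sub_left, inner_sub_right, real_inner_smul_left, real_inner_smul_right,
    real_inner_comm X Y]
  ring

theorem gram_lt_of_timelike_of_spacelike {α u v : ℝ} {X Y : E}
    (hU : u * u - α ^ 2 * ⟪X, X⟫ > 0) (hV : v * v - α ^ 2 * ⟪Y, Y⟫ < 0) :
    α ^ 2 * gram X Y < ⟪u • Y - v • X, u • Y - v • X⟫ := by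
  have key : 0 < α ^ 2 * (⟪u • Y - v • X, u • Y - v • X⟫ - α ^ 2 * gram X Y) := by
    rw [sq_mul_inner_sub_gram_eq]
    nlinarith [sq_nonneg (u * v - α ^ 2 * ⟪X, Y⟫)]
  exact sub_pos.1 (pos_of_mul_pos_right key (sq_nonneg α))

/-- The value `Q(U,V')` of `⟨R(U ∧ V'), U ∧ V'⟩` at `U = (u,X)`, `V' = (v,Y)`. -/
def warpedQ (B : ⋀[ℝ]^2 E →ₗ[ℝ] ⋀[ℝ]^2 E →ₗ[ℝ] ℝ) (α a' a'' u v : ℝ) (X Y : E) : ℝ :=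
  -α ^ 2 * B (wedge2 X Y) (wedge2 X Y) + α * a'' * ⟪u • Y - v • X, u • Y - v • X⟫
    - (α * a') ^ 2 * gram X Y

def WarpedSignCondition (B : ⋀[ℝ]^2 E →ₗ[ℝ] ⋀[ℝ]^2 E →ₗ[ℝ] ℝ) (α a' a'' : ℝ) : Prop :=
  ∀ (u v : ℝ) (X Y : E), u * u - α ^ 2 * ⟪X, X⟫ > 0 → v * v - α ^ 2 * ⟪Y, Y⟫ < 0 →
    warpedQ B α a' a'' u v X Y ≤ 0

section SignCondition

variable {B : ⋀[ℝ]^2 E →ₗ[ℝ] ⋀[ℝ]^2 E →ₗ[ℝ] ℝ} {α a' a'' : ℝ}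

theorem WarpedSignCondition.nonpos [Nontrivial E] (hα : 0 < α)
    (h : WarpedSignCondition B α a' a'') : a'' ≤ 0 := by
  obtain ⟨Y, hY⟩ := exists_ne (0 : E)
  have hYY : 0 < ⟪Y, Y⟫ := real_inner_self_pos.2 hY
  have hQ := h 1 0 0 Y (by simp) (by nlinarith [pow_pos hα 2])
  simp only [warpedQ, gram, wedge2_zero_left, map_zero, one_smul,
    zero_smul, sub_zero, inner_zero_left] at hQ
  nlinarith [mul_pos hα hYY]

theorem WarpedSignCondition.le_of_inner_eq_zero (hα : 0 < α)
    (h : WarpedSignCondition B α a' a'') {X Y : E} (hXY : ⟪X, Y⟫ = 0) :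
    (α * a'' - a' ^ 2) * gram X Y ≤ B (wedge2 X Y) (wedge2 X Y) := by
  rcases eq_or_ne Y 0 with rfl | hY
  · simp [gram, wedge2_zero_right]
  have hYY : 0 < ⟪Y, Y⟫ := real_inner_self_pos.2 hY
  refine le_of_mul_le_mul_left ?_ (pow_pos hα 2)
  refine le_of_forall_pos_le_add_mul (c := -(α * a'' * ⟪Y, Y⟫)) fun t ht => ?_
  obtain ⟨u, hu⟩ : ∃ u : ℝ, u * u = α ^ 2 * ⟪X, X⟫ + t :=
    ⟨_, Real.mul_self_sqrt (by positivity [real_inner_self_nonneg (x := X)])⟩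
  have hQ := h u 0 X Y (by linarith) (by nlinarith [pow_pos hα 2])
  simp only [warpedQ, gram, hXY, zero_smul, sub_zero, real_inner_smul_left,
    real_inner_smul_right] at hQ ⊢
  rw [← mul_assoc u, hu] at hQ
  linarith

theorem WarpedSignCondition.le (hα : 0 < α) (h : WarpedSignCondition B α a' a'') (X Y : E) :
    (α * a'' - a' ^ 2) * gram X Y ≤ B (wedge2 X Y) (wedge2 X Y) := by
  have := h.le_of_inner_eq_zero hα (inner_sub_smul_proj_eq_zero X Y)
  rwa [gram_sub_smul_right, wedge2_sub_smul_right] at this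

theorem warpedSignCondition_of_le (hα : 0 ≤ α) (ha'' : a'' ≤ 0)
    (hB : ∀ X Y : E, (α * a'' - a' ^ 2) * gram X Y ≤ B (wedge2 X Y) (wedge2 X Y)) :
    WarpedSignCondition B α a' a'' := by
  intro u v X Y hU hV
  have hQ : warpedQ B α a' a'' u v X Y
      = -α ^ 2 * (B (wedge2 X Y) (wedge2 X Y) - (α * a'' - a' ^ 2) * gram X Y)
        + α * a'' * (⟪u • Y - v • X, u • Y - v • X⟫ - α ^ 2 * gram X Y) := by
    unfold warpedQ; ring
  rw [hQ]
  exact add_nonpos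
    (mul_nonpos_of_nonpos_of_nonneg (neg_nonpos.2 (sq_nonneg α)) (sub_nonneg.2 (hB X Y)))
    (mul_nonpos_of_nonpos_of_nonneg (mul_nonpos_of_nonneg_of_nonpos hα ha'')
      (sub_pos.2 (gram_lt_of_timelike_of_spacelike hU hV)).le)

end SignCondition

end InnerProductSpace

theorem warped_sign_condition_iff_general
    {E : Type*} [NormedAddCommGroup E] [InnerProductSpace ℝ E]
    (hdim : 2 ≤ Module.finrank ℝ E)
    (B : ⋀[ℝ]^2 E →ₗ[ℝ] ⋀[ℝ]^2 E →ₗ[ℝ] ℝ)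
    (α a' a'' : ℝ) (hα : 0 < α) :
    (∀ (u v : ℝ) (X Y : E),
        u * u - α ^ 2 * ⟪X, X⟫ > 0 →
        v * v - α ^ 2 * ⟪Y, Y⟫ < 0 →
        -α ^ 2 * B (wedge2 X Y) (wedge2 X Y)
          + α * a'' * ⟪u • Y - v • X, u • Y - v • X⟫
          - (α * a') ^ 2 * (⟪X, X⟫ * ⟪Y, Y⟫ - ⟪X, Y⟫ ^ 2) ≤ 0) ↔
      (a'' ≤ 0 ∧
        ∀ X Y : E, B (wedge2 X Y) (wedge2 X Y)
          ≥ (α * a'' - a' ^ 2) * (⟪X, X⟫ * ⟪Y, Y⟫ - ⟪X, Y⟫ ^ 2)) := by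
  have : Nontrivial E := Module.nontrivial_of_finrank_pos (R := ℝ) (by omega)
  change WarpedSignCondition B α a' a'' ↔ a'' ≤ 0 ∧ ∀ X Y : E, _ ≤ _
  exact ⟨fun h => ⟨h.nonpos hα, h.le hα⟩, fun h => warpedSignCondition_of_le hα.le h.1 h.2⟩

/-- Pointwise algebraic content of the sign condition on timelike sectional curvatures of a
warped product `dt² − α(t)² h`: the quantity
`Q(U,V') = −α² B(X∧Y, X∧Y) + α a'' h(uY − vX, uY − vX) − (α a')² Gram(X,Y)`
is `≤ 0` for every timelike `U = (u,X)` and spacelike `V' = (v,Y)` iff `a'' ≤ 0` and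
`B(X∧Y, X∧Y) ≥ (α a'' − a'²)·Gram(X,Y)` for all `X, Y`. -/
theorem warped_sign_condition_iff
    {E : Type*} [NormedAddCommGroup E] [InnerProductSpace ℝ E] [FiniteDimensional ℝ E]
    (hdim : 2 ≤ Module.finrank ℝ E)
    (B : ⋀[ℝ]^2 E →ₗ[ℝ] ⋀[ℝ]^2 E →ₗ[ℝ] ℝ)
    (hBsymm : ∀ ω ψ : ⋀[ℝ]^2 E, B ω ψ = B ψ ω)
    (α a' a'' : ℝ) (hα : 0 < α) :
    (∀ (u v : ℝ) (X Y : E),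
        u * u - α ^ 2 * ⟪X, X⟫ > 0 →
        v * v - α ^ 2 * ⟪Y, Y⟫ < 0 →
        -α ^ 2 * B (wedge2 X Y) (wedge2 X Y)
          + α * a'' * ⟪u • Y - v • X, u • Y - v • X⟫
          - (α * a') ^ 2 * (⟪X, X⟫ * ⟪Y, Y⟫ - ⟪X, Y⟫ ^ 2) ≤ 0) ↔
      (a'' ≤ 0 ∧
        ∀ X Y : E, B (wedge2 X Y) (wedge2 X Y)
          ≥ (α * a'' - a' ^ 2) * (⟪X, X⟫ * ⟪Y, Y⟫ - ⟪X, Y⟫ ^ 2)) :=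
  warped_sign_condition_iff_general hdim B α a' a'' hα
end
end

section
/- Let c > 0 and let s ↦ (t(s), x(s)), for s ∈ [s₀, ∞), be a timelike unit geodesic of the Einstein–de Sitter-like metric (t'' = −c t^{2c−1}|x'|², x'' = −(2c/t) t' x', t'² − t^{2c}|x'|² = 1, t' > 0) with x'(s₀) ≠ 0. Then: (i) x(s) = x(s₀) + (x'(s₀)/|x'(s₀)|) ∫_{s₀}^{s} a·t(τ)^{−2c} dτ where a := t(s₀)^{c}√(t'(s₀)² − 1) > 0; and (ii) the limit lim_{s→∞} x(s) exists in ℝ³ if and only if c > 1/2; for c ≤ 1/2 one has |x(s)| → ∞. -/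
/-!
The space equation `x'' = -(2c/t) t' x'` says that `t^{2c} x'` is conserved, so `x'` keeps the
direction of `x'(s₀)` and has length `a t^{-2c}` with `a = t(s₀)^{2c} |x'(s₀)|`, which the unit
condition at `s₀` identifies with `t(s₀)^c √(t'(s₀)² - 1)`; integrating gives the formula for `x`.
The unit condition also reads `t'² = 1 + a² t^{-2c}`, so `1 ≤ t' ≤ t'(s₀)` and `t` grows linearly.
Hence `∫ t^{-2c}` converges exactly when `2c > 1`, by comparison with `∫ τ^{-2c}`; when it
diverges, `|x(s)| ≥ ∫_{s₀}^s a t^{-2c} - |x(s₀)| → ∞`.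
-/

open Filter Set MeasureTheory Topology

theorem sub_le_mul_sub_of_hasDerivAt_le {f f' : ℝ → ℝ} {a M : ℝ}
    (hf : ∀ s ∈ Ici a, HasDerivAt f (f' s) s) (hle : ∀ s ∈ Ici a, f' s ≤ M) {s : ℝ}
    (hs : a ≤ s) : f s - f a ≤ M * (s - a) :=
  (convex_Ici a).image_sub_le_mul_sub_of_deriv_le
    (fun u hu => (hf u hu).continuousAt.continuousWithinAt)
    (fun u hu => (hf u (interior_subset hu)).differentiableAt.differentiableWithinAt)
    (fun u hu => (hf u (interior_subset hu)).deriv ▸ hle u (interior_subset hu))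
    a self_mem_Ici s hs hs

theorem mul_sub_le_sub_of_le_hasDerivAt {f f' : ℝ → ℝ} {a m : ℝ}
    (hf : ∀ s ∈ Ici a, HasDerivAt f (f' s) s) (hle : ∀ s ∈ Ici a, m ≤ f' s) {s : ℝ}
    (hs : a ≤ s) : m * (s - a) ≤ f s - f a := by
  have := sub_le_mul_sub_of_hasDerivAt_le (f := fun u => -f u) (fun u hu => (hf u hu).neg)
    (fun u hu => neg_le_neg (hle u hu)) hs
  linarith

theorem rpow_smul_eq_of_hasDerivAt_eq_smul {E : Type*} [NormedAddCommGroup E]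
    [NormedSpace ℝ E] {t t' : ℝ → ℝ} {y y' : ℝ → E} {k a : ℝ}
    (hpos : ∀ s ∈ Ici a, 0 < t s) (ht : ∀ s ∈ Ici a, HasDerivAt t (t' s) s)
    (hy : ∀ s ∈ Ici a, HasDerivAt y (y' s) s)
    (hy' : ∀ s ∈ Ici a, y' s = -((k / t s) * t' s) • y s) :
    ∀ s ∈ Ici a, t s ^ k • y s = t a ^ k • y a := by
  have hderiv : ∀ s ∈ Ici a, HasDerivAt (fun u => t u ^ k • y u) 0 s := by
    intro s hs
    refine (((ht s hs).rpow_const (p := k) (Or.inl (hpos s hs).ne')).smul (hy s hs)).congr_deriv ?_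
    rw [hy' s hs, smul_smul, ← add_smul, Real.rpow_sub_one (hpos s hs).ne']
    convert zero_smul ℝ (y s) using 2
    ring
  intro s hs
  exact constant_of_has_deriv_right_zero (f := fun u => t u ^ k • y u)
    (fun u hu => (hderiv u hu.1).continuousAt.continuousWithinAt)
    (fun u hu => (hderiv u hu.1).hasDerivWithinAt) s ⟨hs, le_rfl⟩

theorem eq_add_intervalIntegral_smul_of_hasDerivAt {E : Type*} [NormedAddCommGroup E]
    [NormedSpace ℝ E] [CompleteSpace E] {x : ℝ → E} {φ : ℝ → ℝ} {e : E} {a : ℝ}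
    (hx : ∀ s ∈ Ici a, HasDerivAt x (φ s • e) s) (hφ : ContinuousOn φ (Ici a)) :
    ∀ s ∈ Ici a, x s = x a + (∫ τ in a..s, φ τ) • e := by
  intro s hs
  have hsub : uIcc a s ⊆ Ici a := by
    rw [uIcc_of_le hs]; exact Icc_subset_Ici_self
  rw [← intervalIntegral.integral_smul_const, intervalIntegral.integral_eq_sub_of_hasDerivAt
    (fun τ hτ => hx τ (hsub hτ)) ((hφ.mono hsub).smul continuousOn_const).intervalIntegrable]
  abel

theorem integrableOn_Ioi_rpow_neg_iff_of_linear_growth {g : ℝ → ℝ} {a d K p : ℝ}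
    (hg : ContinuousOn g (Ici a)) (had : 0 < a + d) (hK : 0 < K) (hp : 0 ≤ p)
    (hlow : ∀ τ ∈ Ici a, τ + d ≤ g τ) (hup : ∀ τ ∈ Ici a, g τ ≤ K * (τ + d)) :
    IntegrableOn (fun τ => g τ ^ (-p)) (Ioi a) ↔ 1 < p := by
  have hd : ∀ τ ∈ Ici a, 0 < τ + d := fun τ hτ => by linarith [mem_Ici.1 hτ]
  have hg₀ : ∀ τ ∈ Ici a, 0 < g τ := fun τ hτ => (hd τ hτ).trans_le (hlow τ hτ)
  have hshift : IntegrableOn (fun τ => (τ + d) ^ (-p)) (Ioi a) ↔ 1 < p := by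
    have hpre : Ioi a = (· + d) ⁻¹' Ioi (a + d) := by ext; simp
    rw [hpre, ← neg_lt_neg_iff, ← integrableOn_Ioi_rpow_iff had]
    exact (measurePreserving_add_right volume d).integrableOn_comp_preimage
      (measurableEmbedding_addRight d) (f := fun τ : ℝ => τ ^ (-p))
  have hmeas : AEStronglyMeasurable (fun τ => g τ ^ (-p)) (volume.restrict (Ioi a)) :=
    ((hg.mono Ioi_subset_Ici_self).rpow_const fun τ hτ =>
      Or.inl (hg₀ τ (Ioi_subset_Ici_self hτ)).ne').aestronglyMeasurable measurableSet_Ioi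
  constructor
  · intro h
    refine hshift.1 ((h.const_mul (K ^ p)).mono' ?_ (ae_restrict_of_forall_mem measurableSet_Ioi
      fun τ hτ => ?_))
    · exact (((continuous_add_const d).continuousOn.rpow_const fun τ hτ =>
        Or.inl (hd τ (Ioi_subset_Ici_self hτ)).ne').aestronglyMeasurable measurableSet_Ioi)
    · have hτ' := Ioi_subset_Ici_self hτ
      rw [Real.norm_of_nonneg (Real.rpow_nonneg (hd τ hτ').le _)]
      calc (τ + d) ^ (-p) = K ^ p * (K * (τ + d)) ^ (-p) := by
            rw [Real.mul_rpow hK.le (hd τ hτ').le, ← mul_assoc, Real.rpow_neg hK.le,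
              mul_inv_cancel₀ (Real.rpow_pos_of_pos hK p).ne', one_mul]
        _ ≤ K ^ p * g τ ^ (-p) := by
            gcongr ?_ * ?_
            exact Real.rpow_le_rpow_of_nonpos (hg₀ τ hτ') (hup τ hτ') (neg_nonpos.2 hp)
  · intro h
    refine (hshift.2 h).mono' hmeas (ae_restrict_of_forall_mem measurableSet_Ioi fun τ hτ => ?_)
    have hτ' := Ioi_subset_Ici_self hτ
    rw [Real.norm_of_nonneg (Real.rpow_nonneg (hg₀ τ hτ').le _)]
    exact Real.rpow_le_rpow_of_nonpos (hd τ hτ') (hlow τ hτ') (neg_nonpos.2 hp)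

theorem tendsto_intervalIntegral_atTop_of_not_integrableOn {φ : ℝ → ℝ} {a : ℝ}
    (hφ : ContinuousOn φ (Ici a)) (hφ₀ : ∀ τ ∈ Ici a, 0 ≤ φ τ)
    (hni : ¬ IntegrableOn φ (Ioi a)) :
    Tendsto (fun b => ∫ τ in a..b, φ τ) atTop atTop := by
  have hint : ∀ u v, a ≤ u → u ≤ v → IntervalIntegrable φ volume u v := fun u v hu huv =>
    (hφ.mono (by rw [uIcc_of_le huv]; exact fun τ hτ => hu.trans hτ.1)).intervalIntegrable
  have hmono : MonotoneOn (fun b => ∫ τ in a..b, φ τ) (Ici a) := by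
    intro u hu v _ huv
    dsimp only
    rw [← intervalIntegral.integral_add_adjacent_intervals (hint a u le_rfl hu) (hint u v hu huv)]
    have := intervalIntegral.integral_nonneg (μ := volume) huv fun τ hτ => hφ₀ τ (hu.trans hτ.1)
    linarith
  rw [tendsto_atTop_atTop]
  intro B
  by_contra! hB
  refine hni (integrableOn_Ioi_of_intervalIntegral_norm_bounded B a
    (fun b => (hφ.mono Icc_subset_Ici_self).integrableOn_Icc.mono_set Ioc_subset_Icc_self)
    tendsto_id ?_)
  filter_upwards [eventually_ge_atTop a] with i hi
  obtain ⟨b, hib, hb⟩ := hB i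
  have hnorm : ∫ τ in a..i, ‖φ τ‖ = ∫ τ in a..i, φ τ :=
    intervalIntegral.integral_congr fun τ hτ =>
      Real.norm_of_nonneg (hφ₀ τ (by rw [uIcc_of_le hi] at hτ; exact hτ.1))
  rw [id, hnorm]
  exact (hmono hi (hi.trans hib) hib).trans hb.le

theorem tendsto_norm_atTop_of_eq_add_smul {E : Type*} [NormedAddCommGroup E] [NormedSpace ℝ E]
    {x : ℝ → E} {F : ℝ → ℝ} {x₀ e : E} (he : e ≠ 0) (hx : ∀ᶠ s in atTop, x s = x₀ + F s • e)
    (hF : Tendsto F atTop atTop) : Tendsto (fun s => ‖x s‖) atTop atTop := by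
  refine tendsto_atTop_mono' _ ?_
    (tendsto_atTop_add_const_right _ (-‖x₀‖) (hF.atTop_mul_const (norm_pos_iff.2 he)))
  filter_upwards [hx] with s hs
  have := norm_le_add_norm_add (F s • e) x₀
  rw [norm_smul, add_comm (F s • e), ← hs] at this
  linarith [mul_le_mul_of_nonneg_right (Real.le_norm_self (F s)) (norm_nonneg e)]

theorem tendsto_norm_atTop_of_eq_add_intervalIntegral_smul {E : Type*} [NormedAddCommGroup E]
    [NormedSpace ℝ E] {x : ℝ → E} {φ : ℝ → ℝ} {e : E} {a : ℝ} (he : e ≠ 0)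
    (hφ : ContinuousOn φ (Ici a)) (hφ₀ : ∀ τ ∈ Ici a, 0 ≤ φ τ)
    (hx : ∀ s ∈ Ici a, x s = x a + (∫ τ in a..s, φ τ) • e) (hni : ¬ IntegrableOn φ (Ioi a)) :
    Tendsto (fun s => ‖x s‖) atTop atTop :=
  tendsto_norm_atTop_of_eq_add_smul he ((eventually_ge_atTop a).mono hx)
    (tendsto_intervalIntegral_atTop_of_not_integrableOn hφ hφ₀ hni)

theorem exists_tendsto_iff_integrableOn_of_eq_add_intervalIntegral_smul {E : Type*}
    [NormedAddCommGroup E] [NormedSpace ℝ E] {x : ℝ → E} {φ : ℝ → ℝ} {e : E} {a : ℝ}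
    (he : e ≠ 0) (hφ : ContinuousOn φ (Ici a)) (hφ₀ : ∀ τ ∈ Ici a, 0 ≤ φ τ)
    (hx : ∀ s ∈ Ici a, x s = x a + (∫ τ in a..s, φ τ) • e) :
    (∃ L, Tendsto x atTop (𝓝 L)) ↔ IntegrableOn φ (Ioi a) := by
  refine ⟨fun ⟨L, hL⟩ => ?_, fun hi => ?_⟩
  · by_contra hni
    exact not_tendsto_atTop_of_tendsto_nhds hL.norm
      (tendsto_norm_atTop_of_eq_add_intervalIntegral_smul he hφ hφ₀ hx hni)
  · exact ⟨_, (tendsto_const_nhds.add ((intervalIntegral_tendsto_integral_Ioi a hi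
      tendsto_id).smul_const e)).congr' ((eventually_ge_atTop a).mono fun s hs => (hx s hs).symm)⟩

theorem rpow_mul_sqrt_sq_sub_one_eq {E : Type*} [NormedAddCommGroup E] {T v c : ℝ} {y : E}
    (hT : 0 < T) (h : v ^ 2 - T ^ (2 * c) * ‖y‖ ^ 2 = 1) :
    T ^ c * √(v ^ 2 - 1) = T ^ (2 * c) * ‖y‖ := by
  have hsq : T ^ (2 * c) = (T ^ c) ^ 2 := by
    rw [← Real.rpow_natCast, ← Real.rpow_mul hT.le]; ring_nf
  rw [show v ^ 2 - 1 = (T ^ c * ‖y‖) ^ 2 by rw [mul_pow, ← hsq]; linarith,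
    Real.sqrt_sq (by positivity), hsq]
  ring

theorem eq_rpow_neg_smul_of_rpow_smul_eq {E : Type*} [NormedAddCommGroup E] [NormedSpace ℝ E]
    {k T T₀ : ℝ} {y y₀ : E} (hT : 0 < T) (hy₀ : y₀ ≠ 0) (h : T ^ k • y = T₀ ^ k • y₀) :
    y = (T₀ ^ k * ‖y₀‖ * T ^ (-k)) • (‖y₀‖⁻¹ • y₀) := by
  rw [← inv_smul_smul₀ (Real.rpow_pos_of_pos hT k).ne' y, h, smul_smul, smul_smul,
    Real.rpow_neg hT.le]
  congr 1
  field_simp [norm_ne_zero_iff.2 hy₀]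

/-- `v² - 1 = (T^k ‖y‖)² / T^k` has a conserved numerator, so `v` can only decrease as `T` grows. -/
theorem le_of_sq_sub_rpow_mul_norm_sq_eq_one {E : Type*} [NormedAddCommGroup E]
    [NormedSpace ℝ E] {k T T₀ v v₀ : ℝ} {y y₀ : E} (hk : 0 ≤ k) (hT₀ : 0 < T₀) (hT : T₀ ≤ T)
    (hcons : T ^ k • y = T₀ ^ k • y₀) (h : v ^ 2 - T ^ k * ‖y‖ ^ 2 = 1)
    (h₀ : v₀ ^ 2 - T₀ ^ k * ‖y₀‖ ^ 2 = 1) (hv₀ : 0 ≤ v₀) : v ≤ v₀ := by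
  have hP₀ : 0 < T₀ ^ k := Real.rpow_pos_of_pos hT₀ k
  have hP : T₀ ^ k ≤ T ^ k := Real.rpow_le_rpow hT₀.le hT hk
  have hnorm : T ^ k * ‖y‖ = T₀ ^ k * ‖y₀‖ := by
    simpa [norm_smul, abs_of_pos hP₀, abs_of_pos (hP₀.trans_le hP)] using congrArg norm hcons
  have key : T ^ k * (T ^ k * ‖y‖ ^ 2) ≤ T ^ k * (T₀ ^ k * ‖y₀‖ ^ 2) :=
    calc T ^ k * (T ^ k * ‖y‖ ^ 2) = T₀ ^ k * (T₀ ^ k * ‖y₀‖ ^ 2) := by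
          linear_combination (T ^ k * ‖y‖ + T₀ ^ k * ‖y₀‖) * hnorm
      _ ≤ T ^ k * (T₀ ^ k * ‖y₀‖ ^ 2) := by gcongr
  have hsq : v ^ 2 ≤ v₀ ^ 2 := by
    linarith [le_of_mul_le_mul_left key (hP₀.trans_le hP)]
  exact (le_abs_self v).trans (abs_le_of_sq_le_sq hsq hv₀)

theorem timelike_geodesic_time_linear_bounds {E : Type*} [NormedAddCommGroup E]
    [NormedSpace ℝ E] {k s₀ : ℝ} {t t' : ℝ → ℝ} {y : ℝ → E} (hk : 0 ≤ k)
    (hpos : ∀ s ∈ Ici s₀, 0 < t s) (ht : ∀ s ∈ Ici s₀, HasDerivAt t (t' s) s)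
    (hcons : ∀ s ∈ Ici s₀, t s ^ k • y s = t s₀ ^ k • y s₀)
    (hunit : ∀ s ∈ Ici s₀, t' s ^ 2 - t s ^ k * ‖y s‖ ^ 2 = 1 ∧ 0 < t' s) :
    ∀ s ∈ Ici s₀, s + (t s₀ - s₀) ≤ t s ∧ t s ≤ t' s₀ * (s + (t s₀ - s₀)) := by
  have hone : ∀ s ∈ Ici s₀, 1 ≤ t' s := fun s hs => by
    obtain ⟨h, h'⟩ := hunit s hs
    nlinarith [Real.rpow_nonneg (hpos s hs).le k, sq_nonneg ‖y s‖]
  have hlow : ∀ s ∈ Ici s₀, s + (t s₀ - s₀) ≤ t s := fun s hs => by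
    linarith [mul_sub_le_sub_of_le_hasDerivAt ht hone hs]
  have hle : ∀ s ∈ Ici s₀, t' s ≤ t' s₀ := fun s hs =>
    le_of_sq_sub_rpow_mul_norm_sq_eq_one hk (hpos s₀ self_mem_Ici)
      (by linarith [hlow s hs, mem_Ici.1 hs]) (hcons s hs) (hunit s hs).1
      (hunit s₀ self_mem_Ici).1 (hunit s₀ self_mem_Ici).2.le
  intro s hs
  refine ⟨hlow s hs, ?_⟩
  nlinarith [sub_le_mul_sub_of_hasDerivAt_le ht hle hs, hone s₀ self_mem_Ici, mem_Ici.1 hs,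
    hpos s₀ self_mem_Ici]

theorem eds_timelike_geodesic_space_asymptotics_general (c : ℝ) (hc : 0 < c) (s₀ : ℝ)
    (t t' : ℝ → ℝ) (x x' x'' : ℝ → EuclideanSpace ℝ (Fin 3))
    (hpos : ∀ s ∈ Set.Ici s₀, 0 < t s)
    (ht : ∀ s ∈ Set.Ici s₀, HasDerivAt t (t' s) s)
    (hx : ∀ s ∈ Set.Ici s₀, HasDerivAt x (x' s) s)
    (hx' : ∀ s ∈ Set.Ici s₀, HasDerivAt x' (x'' s) s)
    (geo_x : ∀ s ∈ Set.Ici s₀, x'' s = -((2 * c / t s) * t' s) • x' s)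
    (hunit : ∀ s ∈ Set.Ici s₀, t' s ^ 2 - t s ^ (2 * c) * ‖x' s‖ ^ 2 = 1 ∧ 0 < t' s)
    (hx'0 : x' s₀ ≠ 0) :
    (∀ s ∈ Set.Ici s₀,
      x s = x s₀ +
        (∫ τ in s₀..s, (t s₀ ^ c * Real.sqrt (t' s₀ ^ 2 - 1)) * t τ ^ (-(2 * c))) •
          (‖x' s₀‖⁻¹ • x' s₀)) ∧
    ((∃ L : EuclideanSpace ℝ (Fin 3), Tendsto x atTop (nhds L)) ↔ 1 / 2 < c) ∧
    (c ≤ 1 / 2 → Tendsto (fun s => ‖x s‖) atTop atTop) := by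
  have ht₀ : 0 < t s₀ := hpos s₀ self_mem_Ici
  have hcons := rpow_smul_eq_of_hasDerivAt_eq_smul hpos ht hx' geo_x
  rw [rpow_mul_sqrt_sq_sub_one_eq ht₀ (hunit s₀ self_mem_Ici).1]
  set φ := fun τ => t s₀ ^ (2 * c) * ‖x' s₀‖ * t τ ^ (-(2 * c))
  have htc : ContinuousOn t (Ici s₀) := fun s hs => (ht s hs).continuousAt.continuousWithinAt
  have hφ : ContinuousOn φ (Ici s₀) :=
    continuousOn_const.mul (htc.rpow_const fun s hs => Or.inl (hpos s hs).ne')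
  have hφ₀ : ∀ s ∈ Ici s₀, 0 ≤ φ s := fun s hs => by
    have := hpos s hs; positivity
  have hformula := eq_add_intervalIntegral_smul_of_hasDerivAt
    (fun s hs => eq_rpow_neg_smul_of_rpow_smul_eq (hpos s hs) hx'0 (hcons s hs) ▸ hx s hs) hφ
  have hbounds := timelike_geodesic_time_linear_bounds (by positivity) hpos ht hcons hunit
  have hint : IntegrableOn φ (Ioi s₀) ↔ 1 / 2 < c := by
    have hA : 0 < t s₀ ^ (2 * c) * ‖x' s₀‖ := by have := norm_pos_iff.2 hx'0; positivity
    rw [IntegrableOn, integrable_const_mul_iff hA.ne'.isUnit, ← IntegrableOn,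
      integrableOn_Ioi_rpow_neg_iff_of_linear_growth htc (by linarith) (hunit s₀ self_mem_Ici).2
        (by positivity) (fun s hs => (hbounds s hs).1) (fun s hs => (hbounds s hs).2)]
    constructor <;> intro <;> linarith
  have he : ‖x' s₀‖⁻¹ • x' s₀ ≠ 0 := smul_ne_zero (by simpa using hx'0) hx'0
  refine ⟨hformula,
    (exists_tendsto_iff_integrableOn_of_eq_add_intervalIntegral_smul he hφ hφ₀ hformula).trans hint,
    fun h => tendsto_norm_atTop_of_eq_add_intervalIntegral_smul he hφ hφ₀ hformula
      (hint.not.2 (not_lt.2 h))⟩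

/-- For a timelike unit geodesic of the Einstein–de Sitter-like metric `dt² − t^{2c}|dx|²`
with nonvanishing space velocity: (i) the explicit integral formula for `x(s)`;
(ii) `x(s)` converges as `s → ∞` iff `c > 1/2`; (iii) for `c ≤ 1/2`, `|x(s)| → ∞`. -/
theorem eds_timelike_geodesic_space_asymptotics (c : ℝ) (hc : 0 < c) (s₀ : ℝ)
    (t t' t'' : ℝ → ℝ) (x x' x'' : ℝ → EuclideanSpace ℝ (Fin 3))
    (hpos : ∀ s ∈ Set.Ici s₀, 0 < t s)
    (ht : ∀ s ∈ Set.Ici s₀, HasDerivAt t (t' s) s)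
    (ht' : ∀ s ∈ Set.Ici s₀, HasDerivAt t' (t'' s) s)
    (hx : ∀ s ∈ Set.Ici s₀, HasDerivAt x (x' s) s)
    (hx' : ∀ s ∈ Set.Ici s₀, HasDerivAt x' (x'' s) s)
    (geo_t : ∀ s ∈ Set.Ici s₀, t'' s = -(c * t s ^ (2 * c - 1) * ‖x' s‖ ^ 2))
    (geo_x : ∀ s ∈ Set.Ici s₀, x'' s = -((2 * c / t s) * t' s) • x' s)
    (hunit : ∀ s ∈ Set.Ici s₀, t' s ^ 2 - t s ^ (2 * c) * ‖x' s‖ ^ 2 = 1 ∧ 0 < t' s)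
    (hx'0 : x' s₀ ≠ 0) :
    (∀ s ∈ Set.Ici s₀,
      x s = x s₀ +
        (∫ τ in s₀..s, (t s₀ ^ c * Real.sqrt (t' s₀ ^ 2 - 1)) * t τ ^ (-(2 * c))) •
          (‖x' s₀‖⁻¹ • x' s₀)) ∧
    ((∃ L : EuclideanSpace ℝ (Fin 3), Tendsto x atTop (nhds L)) ↔ 1 / 2 < c) ∧
    (c ≤ 1 / 2 → Tendsto (fun s => ‖x s‖) atTop atTop) :=
  eds_timelike_geodesic_space_asymptotics_general c hc s₀ t t' x x' x'' hpos ht hx hx' geo_x hunit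
    hx'0
end

section
/- Let a > 0 and let t: [s₀, ∞) → (0, ∞) be differentiable with t'(s) = √(1 + a²/t(s)) for all s. Then the function s ↦ √(t(s)(t(s)+a²)) − a² log(√(t(s)) + √(t(s)+a²)) − s is constant on [s₀, ∞), and t(s)/s → 1 as s → ∞. (This describes the time coordinate of timelike geodesics of the Einstein–de Sitter-like metric with exponent c = 1/2, for which t' = √(1 + a² t^{−2c}) with a = t^c√(t'²−1) constant: s − s₀ = √(t_s(t_s+a²)) − a² log(√t_s + √(t_s+a²)) and t_s ∼ s.) -/
/-!
Along a solution, `s ↦ edsProperTime a (t s) - s` has derivative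
`√(t / (t + a²)) · √(1 + a² / t) - 1 = 0`, so it is constant on `[s₀, ∞)`.
Since `t' ≥ 1`, `t → ∞`; and `edsProperTime a x = x + O(1) - a² O(log x) ~ x`, so
`t s ~ edsProperTime a (t s) = s + const ~ s`.
-/

noncomputable section

open Filter Asymptotics Set

/-- An antiderivative of `1 / t' = √(t / (t + a²))`: the proper time along the geodesic as a
function of the coordinate time, up to an additive constant. -/
def edsProperTime (a x : ℝ) : ℝ :=
  √(x * (x + a ^ 2)) - a ^ 2 * Real.log (√x + √(x + a ^ 2))

theorem hasDerivAt_edsProperTime (a : ℝ) {x : ℝ} (hx : 0 < x) :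
    HasDerivAt (edsProperTime a) (√(x / (x + a ^ 2))) x := by
  have hxa : 0 < x + a ^ 2 := by positivity
  have hu : 0 < √x := Real.sqrt_pos.mpr hx
  have hv : 0 < √(x + a ^ 2) := Real.sqrt_pos.mpr hxa
  have hprod : HasDerivAt (fun y => √(y * (y + a ^ 2)))
      ((2 * x + a ^ 2) / (2 * (√x * √(x + a ^ 2)))) x := by
    refine (((hasDerivAt_id' x).fun_mul ((hasDerivAt_id' x).add_const (a ^ 2))).sqrt
      (by positivity)).congr_deriv ?_
    rw [Real.sqrt_mul hx.le]
    ring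
  have hsum : HasDerivAt (fun y => √y + √(y + a ^ 2))
      (1 / (2 * √x) + 1 / (2 * √(x + a ^ 2))) x :=
    (Real.hasDerivAt_sqrt hx.ne').add
      (by simpa using ((hasDerivAt_id x).add_const (a ^ 2)).sqrt hxa.ne')
  refine (hprod.fun_sub ((hsum.log (by positivity)).const_mul (a ^ 2))).congr_deriv ?_
  rw [Real.sqrt_div hx.le]
  field_simp
  linear_combination -2 * (√x + √(x + a ^ 2)) * Real.sq_sqrt hx.le

theorem hasDerivAt_edsProperTime_comp_sub {a s : ℝ} {t : ℝ → ℝ} (hpos : 0 < t s)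
    (ht : HasDerivAt t (√(1 + a ^ 2 / t s)) s) :
    HasDerivAt (fun s => edsProperTime a (t s) - s) 0 s := by
  have hchain := ((hasDerivAt_edsProperTime a hpos).comp s ht).sub (hasDerivAt_id s)
  refine hchain.congr_deriv ?_
  have hprod : t s / (t s + a ^ 2) * (1 + a ^ 2 / t s) = 1 := by field_simp
  rw [← Real.sqrt_mul (by positivity), hprod, Real.sqrt_one, sub_self]

theorem Convex.eq_of_forall_hasDerivAt_zero {f : ℝ → ℝ} {D : Set ℝ} (hD : Convex ℝ D)
    (hf : ∀ x ∈ D, HasDerivAt f 0 x) {x y : ℝ} (hx : x ∈ D) (hy : y ∈ D) : f x = f y := by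
  have h := hD.norm_image_sub_le_of_norm_deriv_le (fun z hz => (hf z hz).differentiableAt)
    (fun z hz => by rw [(hf z hz).deriv, norm_zero]) hy hx
  rwa [zero_mul, norm_le_zero_iff, sub_eq_zero] at h

theorem tendsto_atTop_of_le_hasDerivAt {f f' : ℝ → ℝ} {s₀ c : ℝ} (hc : 0 < c)
    (hf : ∀ s ∈ Ici s₀, HasDerivAt f (f' s) s) (hf' : ∀ s ∈ Ici s₀, c ≤ f' s) :
    Tendsto f atTop atTop := by
  have hgrowth : ∀ s ∈ Ici s₀, c * (s - s₀) ≤ f s - f s₀ := fun s hs =>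
    (convex_Ici s₀).mul_sub_le_image_sub_of_le_deriv
      (fun z hz => (hf z hz).continuousAt.continuousWithinAt)
      (fun z hz => (hf z (interior_subset hz)).differentiableAt.differentiableWithinAt)
      (fun z hz => (hf z (interior_subset hz)).deriv ▸ hf' z (interior_subset hz))
      s₀ self_mem_Ici s hs hs
  refine tendsto_atTop_mono' atTop ?_
    (tendsto_atTop_add_const_right _ (f s₀ - c * s₀) (tendsto_id.const_mul_atTop hc))
  filter_upwards [eventually_ge_atTop s₀] with s hs
  simp only [id]
  linarith [hgrowth s hs]

theorem sqrt_mul_add_sub_self_le {x b : ℝ} (hx : 0 ≤ x) (hb : 0 ≤ b) :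
    |√(x * (x + b)) - x| ≤ b / 2 := by
  have hlow : x ≤ √(x * (x + b)) := Real.le_sqrt_of_sq_le (by nlinarith)
  have hup : √(x * (x + b)) ≤ x + b / 2 := Real.sqrt_le_iff.mpr ⟨by positivity, by nlinarith⟩
  rw [abs_of_nonneg (sub_nonneg.mpr hlow)]
  linarith

theorem isEquivalent_sqrt_mul_add_atTop {b : ℝ} (hb : 0 ≤ b) :
    (fun x => √(x * (x + b))) ~[atTop] id := by
  refine IsBigO.trans_isLittleO (g := fun _ => b / 2) ?_ (isLittleO_const_id_atTop _)
  refine IsBigO.of_bound' ?_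
  filter_upwards [eventually_ge_atTop 0] with x hx
  rw [Real.norm_of_nonneg (by positivity : 0 ≤ b / 2)]
  exact sqrt_mul_add_sub_self_le hx hb

theorem isLittleO_log_sqrt_add_sqrt_add_atTop (b : ℝ) :
    (fun x => Real.log (√x + √(x + b))) =o[atTop] id := by
  set g : ℝ → ℝ := fun x => √x + √(x + b)
  have hg : Tendsto g atTop atTop :=
    tendsto_atTop_add_right_of_le _ 0 Real.tendsto_sqrt_atTop fun _ => Real.sqrt_nonneg _
  have hgO : g =O[atTop] id := by
    refine IsBigO.of_bound (2 + |b|) ?_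
    filter_upwards [eventually_ge_atTop 1] with x hx
    have hsqrt : √x ≤ x := Real.sqrt_le_self_iff.mpr (Or.inr hx)
    have hsqrt_add : √(x + b) ≤ x + |b| :=
      Real.sqrt_le_iff.mpr ⟨by positivity, by nlinarith [le_abs_self b, abs_nonneg b]⟩
    rw [Real.norm_of_nonneg (by positivity), id, Real.norm_of_nonneg (by linarith)]
    nlinarith [abs_nonneg b]
  exact (Real.isLittleO_log_id_atTop.comp_tendsto hg).trans_isBigO hgO

theorem isEquivalent_edsProperTime_atTop (a : ℝ) : edsProperTime a ~[atTop] id :=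
  (isEquivalent_sqrt_mul_add_atTop (sq_nonneg a)).sub_isLittleO
    ((isLittleO_log_sqrt_add_sqrt_add_atTop (a ^ 2)).const_mul_left (a ^ 2))

theorem eds_half_time_geodesic_general (a s₀ : ℝ) (t : ℝ → ℝ)
    (hpos : ∀ s ∈ Set.Ici s₀, 0 < t s)
    (ht : ∀ s ∈ Set.Ici s₀, HasDerivAt t (Real.sqrt (1 + a ^ 2 / t s)) s) :
    (∀ s₁ ∈ Set.Ici s₀, ∀ s₂ ∈ Set.Ici s₀,
      Real.sqrt (t s₁ * (t s₁ + a ^ 2))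
          - a ^ 2 * Real.log (Real.sqrt (t s₁) + Real.sqrt (t s₁ + a ^ 2)) - s₁
        = Real.sqrt (t s₂ * (t s₂ + a ^ 2))
          - a ^ 2 * Real.log (Real.sqrt (t s₂) + Real.sqrt (t s₂ + a ^ 2)) - s₂) ∧
    Tendsto (fun s => t s / s) atTop (nhds 1) := by
  have hconst : ∀ s₁ ∈ Ici s₀, ∀ s₂ ∈ Ici s₀,
      edsProperTime a (t s₁) - s₁ = edsProperTime a (t s₂) - s₂ := fun s₁ hs₁ s₂ hs₂ =>
    (convex_Ici s₀).eq_of_forall_hasDerivAt_zero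
      (fun s hs => hasDerivAt_edsProperTime_comp_sub (hpos s hs) (ht s hs)) hs₁ hs₂
  refine ⟨hconst, ?_⟩
  have hslope : ∀ s ∈ Ici s₀, 1 ≤ √(1 + a ^ 2 / t s) := fun s hs =>
    Real.one_le_sqrt.mpr (le_add_of_nonneg_right (div_nonneg (sq_nonneg a) (hpos s hs).le))
  have htop : Tendsto t atTop atTop := tendsto_atTop_of_le_hasDerivAt one_pos ht hslope
  have hshift : (fun s => s + (edsProperTime a (t s₀) - s₀)) =ᶠ[atTop]
      fun s => edsProperTime a (t s) := by
    filter_upwards [eventually_ge_atTop s₀] with s hs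
    linarith [hconst s hs s₀ self_mem_Ici]
  have hequiv : t ~[atTop] id :=
    ((isEquivalent_edsProperTime_atTop a).comp_tendsto htop).symm.trans
      ((IsEquivalent.refl.add_const_of_norm_tendsto_atTop tendsto_norm_atTop_atTop).congr_left
        hshift)
  exact (isEquivalent_iff_tendsto_one (eventually_ne_atTop 0)).mp hequiv

/-- If `t' = √(1 + a²/t)` (the time coordinate of a timelike geodesic of the
Einstein–de Sitter-like metric with exponent `c = 1/2`), then
`√(t(t+a²)) − a² log(√t + √(t+a²)) − s` is constant, and `t(s)/s → 1` as `s → ∞`. -/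
theorem eds_half_time_geodesic (a s₀ : ℝ) (ha : 0 < a) (t : ℝ → ℝ)
    (hpos : ∀ s ∈ Set.Ici s₀, 0 < t s)
    (ht : ∀ s ∈ Set.Ici s₀, HasDerivAt t (Real.sqrt (1 + a ^ 2 / t s)) s) :
    (∀ s₁ ∈ Set.Ici s₀, ∀ s₂ ∈ Set.Ici s₀,
      Real.sqrt (t s₁ * (t s₁ + a ^ 2))
          - a ^ 2 * Real.log (Real.sqrt (t s₁) + Real.sqrt (t s₁ + a ^ 2)) - s₁
        = Real.sqrt (t s₂ * (t s₂ + a ^ 2))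
          - a ^ 2 * Real.log (Real.sqrt (t s₂) + Real.sqrt (t s₂ + a ^ 2)) - s₂) ∧
    Tendsto (fun s => t s / s) atTop (nhds 1) :=
  eds_half_time_geodesic_general a s₀ t hpos ht
end
end
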